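/- In the tree reduced instance: if there exists W ⊆ V \ {z*_1} such that candidate c uniquely wins the election restricted to W, then there exists A ⊆ {1, …, m} such that candidate c uniquely wins the election restricted to W' = {v^(i)_1 : i ∈ A} (i.e., any successful deletion set can be replaced by one consisting only of heads of the paths P^(i)). -/

import Mathlib

/-- Vertices of the tree reduced instance: for each `i ∈ [m]`, the path `P^(i)` has
vertices `v i j` (`j : Fin 3`, the vertices `v^(i)_1, v^(i)_2, v^(i)_3`), `u i k`
(`k : Fin (3ℓ)`, the vertices `u^(i)_1, …, u^(i)_{3ℓ}`) and `w i`; the path `P^#` has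
vertices `zh 0, zh 1`; the path `P^*` has vertices `zs t` for `t : Fin (m + 1 - ℓ)`
(all 0-indexed). -/
inductive VT (ℓ m : ℕ) : Type
  | v (i : Fin m) (j : Fin 3) : VT ℓ m
  | u (i : Fin m) (k : Fin (3 * ℓ)) : VT ℓ m
  | w (i : Fin m) : VT ℓ m
  | zh (j : Fin 2) : VT ℓ m
  | zs (t : Fin (m + 1 - ℓ)) : VT ℓ m
  deriving DecidableEq

/-- The candidate set `C = U ∪ {c, d}`, where `U = {1, …, 3ℓ}`. -/
inductive CandT (ℓ : ℕ) : Type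
  | elem (k : Fin (3 * ℓ)) : CandT ℓ
  | c : CandT ℓ
  | d : CandT ℓ
  deriving DecidableEq

/-- Base edge relation of the tree reduced instance: consecutive vertices of each path
`P^(i) = (v^(i)_1, v^(i)_2, v^(i)_3, u^(i)_1, …, u^(i)_{3ℓ}, w^(i))`, of
`P^# = (z#_1, z#_2)` and of `P^* = (z*_1, …, z*_{m+1−ℓ})` are adjacent, and the last
vertex `z*_{m+1−ℓ}` of `P^*` is joined to each head `v^(i)_1` and to `z#_1`. -/
def baseRelT (ℓ m : ℕ) : VT ℓ m → VT ℓ m → Prop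
  | .v i j, .v i' j' => i = i' ∧ (j : ℕ) + 1 = (j' : ℕ)
  | .v i j, .u i' k => i = i' ∧ (j : ℕ) = 2 ∧ (k : ℕ) = 0
  | .u i k, .u i' k' => i = i' ∧ (k : ℕ) + 1 = (k' : ℕ)
  | .u i k, .w i' => i = i' ∧ (k : ℕ) + 1 = 3 * ℓ
  | .zh j, .zh j' => (j : ℕ) + 1 = (j' : ℕ)
  | .zs t, .zs t' => (t : ℕ) + 1 = (t' : ℕ)
  | .zs t, .v _ j => (t : ℕ) + 1 = m + 1 - ℓ ∧ (j : ℕ) = 0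
  | .zs t, .zh j => (t : ℕ) + 1 = m + 1 - ℓ ∧ (j : ℕ) = 0
  | _, _ => False

/-- The tree of the tree reduced instance. -/
def GT (ℓ m : ℕ) : SimpleGraph (VT ℓ m) := SimpleGraph.fromRel (baseRelT ℓ m)

/-- The voting function, given an enumeration `e i 0, e i 1, e i 2` of the elements of
each set `S_i`: `v^(i)_j` votes for `e^(i)_j`, `u^(i)_k` votes for `k`, the `w^(i)` and
`z#`'s vote for `c`, and the `z*`'s vote for `d`. -/
def τT (ℓ m : ℕ) (e : Fin m → Fin 3 → Fin (3 * ℓ)) : VT ℓ m → CandT ℓ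
  | .v i j => CandT.elem (e i j)
  | .u _ k => CandT.elem k
  | .w _ => CandT.c
  | .zh _ => CandT.c
  | .zs _ => CandT.d

/-- The set `S_i`, recovered from the enumeration of its elements. -/
def SetT (ℓ m : ℕ) (e : Fin m → Fin 3 → Fin (3 * ℓ)) (i : Fin m) :
    Finset (Fin (3 * ℓ)) :=
  Finset.image (e i) Finset.univ

/-- The distinguished vertex `x = z*_1`. -/
def xT (ℓ m : ℕ) (h : 0 < m + 1 - ℓ) : VT ℓ m := VT.zs ⟨0, h⟩

/-- `HW G W x`: the set of vertices reachable from `x` in the subgraph of `G` induced on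
the complement of `W` (each step of a connecting walk must avoid `W`). -/
def HW {V : Type*} (G : SimpleGraph V) (W : Set V) (x : V) : Set V :=
  {z | Relation.ReflTransGen (fun a b => G.Adj a b ∧ a ∉ W ∧ b ∉ W) x z}

/-- Candidate `c` uniquely wins the election restricted to `W`: every other candidate
gets strictly fewer votes among the voters of `H_W`. -/
def winsT (ℓ m : ℕ) (e : Fin m → Fin 3 → Fin (3 * ℓ)) (x : VT ℓ m)
    (W : Set (VT ℓ m)) : Prop :=
  ∀ y : CandT ℓ, y ≠ CandT.c →
    (HW (GT ℓ m) W x ∩ τT ℓ m e ⁻¹' {y}).ncard <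
      (HW (GT ℓ m) W x ∩ τT ℓ m e ⁻¹' {CandT.c}).ncard

namespace TreeAux
variable {ℓ m : ℕ}

def par (hℓ : 1 ≤ ℓ) (hm : ℓ ≤ m) : VT ℓ m → VT ℓ m
  | .v _ ⟨0, _⟩ => .zs ⟨m - ℓ, by omega⟩
  | .v i ⟨j+1, h⟩ => .v i ⟨j, by omega⟩
  | .u i ⟨0, _⟩ => .v i ⟨2, by omega⟩
  | .u i ⟨k+1, h⟩ => .u i ⟨k, by omega⟩
  | .w i => .u i ⟨3*ℓ - 1, by omega⟩
  | .zh ⟨0, _⟩ => .zs ⟨m - ℓ, by omega⟩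
  | .zh ⟨j+1, h⟩ => .zh ⟨j, by omega⟩
  | .zs ⟨0, h⟩ => .zs ⟨0, h⟩
  | .zs ⟨t+1, h⟩ => .zs ⟨t, by omega⟩

variable (hℓ : 1 ≤ ℓ) (hm : ℓ ≤ m)

theorem par_v_zero (i : Fin m) (h : 0 < 3) :
    par hℓ hm (.v i ⟨0, h⟩) = .zs ⟨m - ℓ, by omega⟩ := rfl
theorem par_v_succ (i : Fin m) (n : ℕ) (h : n + 1 < 3) :
    par hℓ hm (.v i ⟨n+1, h⟩) = .v i ⟨n, by omega⟩ := rfl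
theorem par_u_zero (i : Fin m) (h : 0 < 3*ℓ) :
    par hℓ hm (.u i ⟨0, h⟩) = .v i ⟨2, by omega⟩ := rfl
theorem par_u_succ (i : Fin m) (n : ℕ) (h : n + 1 < 3*ℓ) :
    par hℓ hm (.u i ⟨n+1, h⟩) = .u i ⟨n, by omega⟩ := rfl
theorem par_w (i : Fin m) :
    par hℓ hm (.w i) = .u i ⟨3*ℓ - 1, by omega⟩ := rfl
theorem par_zh_zero (h : 0 < 2) :
    par hℓ hm (.zh ⟨0, h⟩) = .zs ⟨m - ℓ, by omega⟩ := rfl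
theorem par_zh_succ (n : ℕ) (h : n + 1 < 2) :
    par hℓ hm (.zh ⟨n+1, h⟩) = .zh ⟨n, by omega⟩ := rfl
theorem par_zs_zero (h : 0 < m + 1 - ℓ) :
    par hℓ hm (.zs ⟨0, h⟩) = .zs ⟨0, h⟩ := rfl
theorem par_zs_succ (n : ℕ) (h : n + 1 < m + 1 - ℓ) :
    par hℓ hm (.zs ⟨n+1, h⟩) = .zs ⟨n, by omega⟩ := rfl
end TreeAux

namespace TreeAux
variable {ℓ m : ℕ}
def dep : VT ℓ m → ℕ
  | .v _ j => m - ℓ + 1 + j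
  | .u _ k => m - ℓ + 4 + k
  | .w _ => m - ℓ + 4 + 3*ℓ
  | .zh j => m - ℓ + 1 + j
  | .zs t => t
end TreeAux

namespace TreeAux
variable {ℓ m : ℕ} (hℓ : 1 ≤ ℓ) (hm : ℓ ≤ m)

theorem par_v_pos (i : Fin m) (n : ℕ) (h : n < 3) (hn : 0 < n) :
    par hℓ hm (.v i ⟨n, h⟩) = .v i ⟨n - 1, by omega⟩ := by
  obtain ⟨k, rfl⟩ : ∃ k, n = k + 1 := ⟨n - 1, by omega⟩
  rw [par_v_succ]
  exact congrArg _ (Fin.ext rfl)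

theorem par_u_pos (i : Fin m) (n : ℕ) (h : n < 3*ℓ) (hn : 0 < n) :
    par hℓ hm (.u i ⟨n, h⟩) = .u i ⟨n - 1, by omega⟩ := by
  obtain ⟨k, rfl⟩ : ∃ k, n = k + 1 := ⟨n - 1, by omega⟩
  rw [par_u_succ]
  exact congrArg _ (Fin.ext rfl)

theorem par_zh_pos (n : ℕ) (h : n < 2) (hn : 0 < n) :
    par hℓ hm (.zh ⟨n, h⟩) = .zh ⟨n - 1, by omega⟩ := by
  obtain ⟨k, rfl⟩ : ∃ k, n = k + 1 := ⟨n - 1, by omega⟩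
  rw [par_zh_succ]
  exact congrArg _ (Fin.ext rfl)

end TreeAux
namespace TreeAux

theorem fin_eq' {n a : ℕ} (ha : a < n) (b : Fin n) (h : a = (b : ℕ)) :
    (⟨a, ha⟩ : Fin n) = b := Fin.ext h

variable {ℓ m : ℕ} (hℓ : 1 ≤ ℓ) (hm : ℓ ≤ m)

theorem par_baseRel {z z' : VT ℓ m} (h : baseRelT ℓ m z z') : par hℓ hm z' = z := by
  cases z with
  | v i j =>
    cases z' with
    | v i' j' =>
      obtain ⟨rfl, h2⟩ := h
      obtain ⟨jv, hlt⟩ := j'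
      have h2' : (j : ℕ) + 1 = jv := h2
      subst h2'
      rw [par_v_succ]
    | u i' k =>
      obtain ⟨rfl, h2, h3⟩ := h
      obtain ⟨kv, hlt⟩ := k
      have h3' : 0 = kv := h3.symm
      subst h3'
      rw [par_u_zero]
      exact congrArg _ (fin_eq' _ _ h2.symm)
    | w i' => exact absurd h id
    | zh j' => exact absurd h id
    | zs t => exact absurd h id
  | u i k =>
    cases z' with
    | u i' k' =>
      obtain ⟨rfl, h2⟩ := h
      obtain ⟨kv, hlt⟩ := k'
      have h2' : (k : ℕ) + 1 = kv := h2
      subst h2'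
      rw [par_u_succ]
    | w i' =>
      obtain ⟨rfl, h2⟩ := h
      rw [par_w]
      exact congrArg _ (fin_eq' _ _ (by omega))
    | v _ _ => exact absurd h id
    | zh _ => exact absurd h id
    | zs _ => exact absurd h id
  | w i => cases z' <;> exact absurd h id
  | zh j =>
    cases z' with
    | zh j' =>
      obtain ⟨jv, hlt⟩ := j'
      have h' : (j : ℕ) + 1 = jv := h
      subst h'
      rw [par_zh_succ]
    | v _ _ => exact absurd h id
    | u _ _ => exact absurd h id
    | w _ => exact absurd h id
    | zs _ => exact absurd h id
  | zs t =>
    cases z' with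
    | zs t' =>
      obtain ⟨tv, hlt⟩ := t'
      have h' : (t : ℕ) + 1 = tv := h
      subst h'
      rw [par_zs_succ]
    | v i' j' =>
      obtain ⟨h1, h2⟩ := h
      obtain ⟨jv, hlt⟩ := j'
      have h2' : 0 = jv := h2.symm
      subst h2'
      rw [par_v_zero]
      exact congrArg _ (fin_eq' _ _ (by omega))
    | zh j' =>
      obtain ⟨h1, h2⟩ := h
      obtain ⟨jv, hlt⟩ := j'
      have h2' : 0 = jv := h2.symm
      subst h2'
      rw [par_zh_zero]
      exact congrArg _ (fin_eq' _ _ (by omega))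
    | u _ _ => exact absurd h id
    | w _ => exact absurd h id

end TreeAux
namespace TreeAux
variable {ℓ m : ℕ} (hℓ : 1 ≤ ℓ) (hm : ℓ ≤ m)
include hℓ hm

theorem adj_par {z z' : VT ℓ m} (h : (GT ℓ m).Adj z z') :
    par hℓ hm z' = z ∨ par hℓ hm z = z' := by
  rw [GT, SimpleGraph.fromRel_adj] at h
  rcases h.2 with h2 | h2
  · exact Or.inl (par_baseRel hℓ hm h2)
  · exact Or.inr (par_baseRel hℓ hm h2)

theorem dep_par {z : VT ℓ m} (hz : z ≠ VT.zs ⟨0, Nat.sub_pos_of_lt (Nat.lt_succ_of_le hm)⟩) :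
    dep (par hℓ hm z) < dep z := by
  cases z with
  | v i j =>
    obtain ⟨jv, hlt⟩ := j
    match jv, hlt with
    | 0, hlt => rw [par_v_zero]; simp [dep] <;> omega
    | n+1, hlt => rw [par_v_succ]; simp [dep]
  | u i k =>
    obtain ⟨kv, hlt⟩ := k
    match kv, hlt with
    | 0, hlt => rw [par_u_zero]; simp [dep]
    | n+1, hlt => rw [par_u_succ]; simp [dep]
  | w i => rw [par_w]; simp [dep] <;> omega
  | zh j =>
    obtain ⟨jv, hlt⟩ := j
    match jv, hlt with
    | 0, hlt => rw [par_zh_zero]; simp [dep] <;> omega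
    | n+1, hlt => rw [par_zh_succ]; simp [dep]
  | zs t =>
    obtain ⟨tv, hlt⟩ := t
    match tv, hlt with
    | 0, hlt => exact absurd rfl hz
    | n+1, hlt => rw [par_zs_succ]; simp [dep]

theorem adj_par' {z : VT ℓ m} (hz : z ≠ VT.zs ⟨0, Nat.sub_pos_of_lt (Nat.lt_succ_of_le hm)⟩) :
    (GT ℓ m).Adj (par hℓ hm z) z := by
  rw [GT, SimpleGraph.fromRel_adj]
  refine ⟨fun he => absurd (he ▸ dep_par hℓ hm hz) (lt_irrefl _), Or.inl ?_⟩
  cases z with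
  | v i j =>
    obtain ⟨jv, hlt⟩ := j
    match jv, hlt with
    | 0, hlt => rw [par_v_zero]; exact ⟨by simp; omega, rfl⟩
    | n+1, hlt => rw [par_v_succ]; exact ⟨rfl, rfl⟩
  | u i k =>
    obtain ⟨kv, hlt⟩ := k
    match kv, hlt with
    | 0, hlt => rw [par_u_zero]; exact ⟨rfl, rfl, rfl⟩
    | n+1, hlt => rw [par_u_succ]; exact ⟨rfl, rfl⟩
  | w i => rw [par_w]; exact ⟨rfl, by simp; omega⟩
  | zh j =>
    obtain ⟨jv, hlt⟩ := j
    match jv, hlt with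
    | 0, hlt => rw [par_zh_zero]; exact ⟨by simp; omega, rfl⟩
    | n+1, hlt => rw [par_zh_succ]; rfl
  | zs t =>
    obtain ⟨tv, hlt⟩ := t
    match tv, hlt with
    | 0, hlt => exact absurd rfl hz
    | n+1, hlt => rw [par_zs_succ]; rfl

theorem mem_HW_iff {W : Set (VT ℓ m)} (hx : VT.zs ⟨0, Nat.sub_pos_of_lt (Nat.lt_succ_of_le hm)⟩ ∉ W) (z : VT ℓ m) :
    z ∈ HW (GT ℓ m) W (VT.zs ⟨0, Nat.sub_pos_of_lt (Nat.lt_succ_of_le hm)⟩) ↔ ∀ k, (par hℓ hm)^[k] z ∉ W := by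
  constructor
  · intro h
    induction h with
    | refl => intro k; rw [Function.iterate_fixed (par_zs_zero hℓ hm _)]; exact hx
    | @tail b c _ hstep ih =>
      obtain ⟨hadj, hbW, hcW⟩ := hstep
      rcases adj_par hℓ hm hadj with hp | hp
      · intro k
        cases k with
        | zero => exact hcW
        | succ k => rw [Function.iterate_succ_apply, hp]; exact ih k
      · intro k
        have := ih (k + 1)
        rwa [Function.iterate_succ_apply, hp] at this
  · have key : ∀ n (z : VT ℓ m), dep z = n → (∀ k, (par hℓ hm)^[k] z ∉ W) →
        z ∈ HW (GT ℓ m) W (VT.zs ⟨0, Nat.sub_pos_of_lt (Nat.lt_succ_of_le hm)⟩) := by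
      intro n
      induction n using Nat.strong_induction_on with
      | _ n ih =>
        intro z hdep hz
        by_cases hzx : z = VT.zs ⟨0, Nat.sub_pos_of_lt (Nat.lt_succ_of_le hm)⟩
        · rw [hzx]; exact Relation.ReflTransGen.refl
        · have h1 : par hℓ hm z ∈ HW (GT ℓ m) W (VT.zs ⟨0, Nat.sub_pos_of_lt (Nat.lt_succ_of_le hm)⟩) := by
            refine ih (dep (par hℓ hm z)) (hdep ▸ dep_par hℓ hm hzx) _ rfl fun k => ?_
            have := hz (k + 1)
            rwa [Function.iterate_succ_apply] at this
          refine h1.tail ⟨adj_par' hℓ hm hzx, ?_, hz 0⟩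
          have := hz 1
          rwa [Function.iterate_one] at this
    exact key (dep z) z rfl

theorem mem_par {W : Set (VT ℓ m)} (hx : VT.zs ⟨0, Nat.sub_pos_of_lt (Nat.lt_succ_of_le hm)⟩ ∉ W) {z : VT ℓ m}
    (h : z ∈ HW (GT ℓ m) W (VT.zs ⟨0, Nat.sub_pos_of_lt (Nat.lt_succ_of_le hm)⟩)) :
    par hℓ hm z ∈ HW (GT ℓ m) W (VT.zs ⟨0, Nat.sub_pos_of_lt (Nat.lt_succ_of_le hm)⟩) := by
  rw [mem_HW_iff hℓ hm hx] at h ⊢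
  intro k
  have := h (k + 1)
  rwa [Function.iterate_succ_apply] at this

theorem not_mem_of_mem_HW {W : Set (VT ℓ m)} (hx : VT.zs ⟨0, Nat.sub_pos_of_lt (Nat.lt_succ_of_le hm)⟩ ∉ W) {z : VT ℓ m}
    (h : z ∈ HW (GT ℓ m) W (VT.zs ⟨0, Nat.sub_pos_of_lt (Nat.lt_succ_of_le hm)⟩)) : z ∉ W := by
  rw [mem_HW_iff hℓ hm hx] at h
  exact h 0

end TreeAux
namespace TreeAux
variable {ℓ m : ℕ}

instance : Finite (VT ℓ m) := by
  let f : VT ℓ m → (Fin m × Fin 3) ⊕ (Fin m × Fin (3*ℓ)) ⊕ (Fin m) ⊕ (Fin 2) ⊕ (Fin (m+1-ℓ)) :=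
    fun z => match z with
    | .v i j => .inl (i, j)
    | .u i k => .inr (.inl (i, k))
    | .w i => .inr (.inr (.inl i))
    | .zh j => .inr (.inr (.inr (.inl j)))
    | .zs t => .inr (.inr (.inr (.inr t)))
  exact Finite.of_injective f (by
    intro a b h
    cases a <;> cases b <;> simp_all [f])

variable (hℓ : 1 ≤ ℓ) (hm : ℓ ≤ m)
include hℓ hm

/-- Generic membership lemma: a `par`-closed set disjoint from `W` is inside `H_W`. -/
theorem mem_HW_of_closed {W : Set (VT ℓ m)} (hx : VT.zs ⟨0, Nat.sub_pos_of_lt (Nat.lt_succ_of_le hm)⟩ ∉ W)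
    (S : Set (VT ℓ m)) (hS : ∀ z ∈ S, par hℓ hm z ∈ S) (hSW : ∀ z ∈ S, z ∉ W)
    {z : VT ℓ m} (hz : z ∈ S) :
    z ∈ HW (GT ℓ m) W (VT.zs ⟨0, Nat.sub_pos_of_lt (Nat.lt_succ_of_le hm)⟩) := by
  rw [mem_HW_iff hℓ hm hx]
  intro k
  have : (par hℓ hm)^[k] z ∈ S := by
    induction k with
    | zero => exact hz
    | succ k ih => rw [Function.iterate_succ_apply']; exact hS _ ih
  exact hSW _ this

theorem par_mem_zs {z : VT ℓ m} (h : ∃ t, z = VT.zs t) :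
    ∃ t, par hℓ hm z = VT.zs t := by
  obtain ⟨t, rfl⟩ := h
  obtain ⟨tv, hlt⟩ := t
  match tv, hlt with
  | 0, hlt => exact ⟨_, par_zs_zero hℓ hm _⟩
  | n+1, hlt => exact ⟨_, par_zs_succ hℓ hm _ _⟩

theorem par_mem_Z {z : VT ℓ m} (h : (∃ t, z = VT.zs t) ∨ (∃ j, z = VT.zh j)) :
    (∃ t, par hℓ hm z = VT.zs t) ∨ (∃ j, par hℓ hm z = VT.zh j) := by
  rcases h with h | h
  · exact Or.inl (par_mem_zs hℓ hm h)
  · obtain ⟨j, rfl⟩ := h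
    obtain ⟨jv, hlt⟩ := j
    match jv, hlt with
    | 0, hlt => exact Or.inl ⟨_, par_zh_zero hℓ hm _⟩
    | n+1, hlt => exact Or.inr ⟨_, par_zh_succ hℓ hm _ _⟩

/-- The branch of index `i` together with the trunk, closed under `par`. -/
def inB (i : Fin m) (z : VT ℓ m) : Prop :=
  z = VT.w i ∨ (∃ k, z = VT.u i k) ∨ (∃ j, z = VT.v i j) ∨ (∃ t, z = VT.zs t)

theorem par_mem_B {i : Fin m} {z : VT ℓ m} (h : inB i z) : inB i (par hℓ hm z) := by
  rcases h with rfl | ⟨k, rfl⟩ | ⟨j, rfl⟩ | h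
  · exact Or.inr (Or.inl ⟨_, par_w hℓ hm i⟩)
  · obtain ⟨kv, hlt⟩ := k
    match kv, hlt with
    | 0, hlt => exact Or.inr (Or.inr (Or.inl ⟨_, par_u_zero hℓ hm i _⟩))
    | n+1, hlt => exact Or.inr (Or.inl ⟨_, par_u_succ hℓ hm i _ _⟩)
  · obtain ⟨jv, hlt⟩ := j
    match jv, hlt with
    | 0, hlt => exact Or.inr (Or.inr (Or.inr ⟨_, par_v_zero hℓ hm i _⟩))
    | n+1, hlt => exact Or.inr (Or.inr (Or.inl ⟨_, par_v_succ hℓ hm i _ _⟩))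
  · exact Or.inr (Or.inr (Or.inr (par_mem_zs hℓ hm h)))

section Desc
variable {W : Set (VT ℓ m)} (hx : VT.zs ⟨0, Nat.sub_pos_of_lt (Nat.lt_succ_of_le hm)⟩ ∉ W)
include hx

theorem zs_desc {n : ℕ} (h : n < m + 1 - ℓ)
    (hn : VT.zs ⟨n, h⟩ ∈ HW (GT ℓ m) W (VT.zs ⟨0, Nat.sub_pos_of_lt (Nat.lt_succ_of_le hm)⟩)) :
    ∀ s (hs : s ≤ n), VT.zs ⟨s, by omega⟩ ∈ HW (GT ℓ m) W (VT.zs ⟨0, Nat.sub_pos_of_lt (Nat.lt_succ_of_le hm)⟩) := by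
  induction n with
  | zero =>
    intro s hs
    obtain rfl : s = 0 := Nat.le_zero.mp hs
    exact hn
  | succ n ih =>
    intro s hs
    have hmem : VT.zs ⟨n, by omega⟩ ∈ HW (GT ℓ m) W (VT.zs ⟨0, Nat.sub_pos_of_lt (Nat.lt_succ_of_le hm)⟩) := by
      have := mem_par hℓ hm hx hn
      rwa [par_zs_succ] at this
    rcases Nat.lt_or_ge s (n+1) with hlt | hge
    · exact ih (by omega) hmem s (by omega)
    · obtain rfl : s = n + 1 := by omega
      exact hn

theorem u_desc {i : Fin m} {n : ℕ} (h : n < 3 * ℓ)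
    (hn : VT.u i ⟨n, h⟩ ∈ HW (GT ℓ m) W (VT.zs ⟨0, Nat.sub_pos_of_lt (Nat.lt_succ_of_le hm)⟩)) :
    ∀ s (hs : s ≤ n), VT.u i ⟨s, by omega⟩ ∈ HW (GT ℓ m) W (VT.zs ⟨0, Nat.sub_pos_of_lt (Nat.lt_succ_of_le hm)⟩) := by
  induction n with
  | zero =>
    intro s hs
    obtain rfl : s = 0 := Nat.le_zero.mp hs
    exact hn
  | succ n ih =>
    intro s hs
    have hmem : VT.u i ⟨n, by omega⟩ ∈ HW (GT ℓ m) W (VT.zs ⟨0, Nat.sub_pos_of_lt (Nat.lt_succ_of_le hm)⟩) := by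
      have := mem_par hℓ hm hx hn
      rwa [par_u_succ] at this
    rcases Nat.lt_or_ge s (n+1) with hlt | hge
    · exact ih (by omega) hmem s (by omega)
    · obtain rfl : s = n + 1 := by omega
      exact hn

theorem v_desc0 {i : Fin m} {j : Fin 3}
    (hj : VT.v i j ∈ HW (GT ℓ m) W (VT.zs ⟨0, Nat.sub_pos_of_lt (Nat.lt_succ_of_le hm)⟩)) :
    VT.v i ⟨0, by omega⟩ ∈ HW (GT ℓ m) W (VT.zs ⟨0, Nat.sub_pos_of_lt (Nat.lt_succ_of_le hm)⟩) := by
  obtain ⟨jv, hlt⟩ := j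
  match jv, hlt with
  | 0, hlt => exact hj
  | 1, hlt =>
    have := mem_par hℓ hm hx hj
    rw [par_v_pos hℓ hm i 1 hlt (by omega)] at this
    exact this
  | 2, hlt =>
    have h1 := mem_par hℓ hm hx hj
    rw [par_v_pos hℓ hm i 2 hlt (by omega)] at h1
    have h0 := mem_par hℓ hm hx h1
    rw [par_v_pos hℓ hm i (2-1) (by omega) (by omega)] at h0
    exact h0

theorem w_branch {i : Fin m} (hw : VT.w i ∈ HW (GT ℓ m) W (VT.zs ⟨0, Nat.sub_pos_of_lt (Nat.lt_succ_of_le hm)⟩)) :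
    (∀ k : Fin (3*ℓ), VT.u i k ∈ HW (GT ℓ m) W (VT.zs ⟨0, Nat.sub_pos_of_lt (Nat.lt_succ_of_le hm)⟩)) ∧
    (∀ j : Fin 3, VT.v i j ∈ HW (GT ℓ m) W (VT.zs ⟨0, Nat.sub_pos_of_lt (Nat.lt_succ_of_le hm)⟩)) := by
  have htop : VT.u i ⟨3*ℓ - 1, by omega⟩ ∈ HW (GT ℓ m) W (VT.zs ⟨0, Nat.sub_pos_of_lt (Nat.lt_succ_of_le hm)⟩) := by
    have := mem_par hℓ hm hx hw
    rwa [par_w] at this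
  have hu : ∀ k : Fin (3*ℓ), VT.u i k ∈ HW (GT ℓ m) W (VT.zs ⟨0, Nat.sub_pos_of_lt (Nat.lt_succ_of_le hm)⟩) := by
    intro k
    exact u_desc hℓ hm hx (by omega) htop k.val (by omega)
  have hv2 : VT.v i ⟨2, by omega⟩ ∈ HW (GT ℓ m) W (VT.zs ⟨0, Nat.sub_pos_of_lt (Nat.lt_succ_of_le hm)⟩) := by
    have := mem_par hℓ hm hx (hu ⟨0, by omega⟩)
    rwa [par_u_zero] at this
  have hv1 : VT.v i ⟨1, by omega⟩ ∈ HW (GT ℓ m) W (VT.zs ⟨0, Nat.sub_pos_of_lt (Nat.lt_succ_of_le hm)⟩) := by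
    have := mem_par hℓ hm hx hv2
    rw [par_v_pos hℓ hm i 2 (by omega) (by omega)] at this
    exact this
  have hv0 : VT.v i ⟨0, by omega⟩ ∈ HW (GT ℓ m) W (VT.zs ⟨0, Nat.sub_pos_of_lt (Nat.lt_succ_of_le hm)⟩) :=
    v_desc0 hℓ hm hx hv1
  refine ⟨hu, fun j => ?_⟩
  obtain ⟨jv, hlt⟩ := j
  match jv, hlt with
  | 0, hlt => exact hv0
  | 1, hlt => exact hv1
  | 2, hlt => exact hv2

theorem u_desc0 {i : Fin m} {k : Fin (3*ℓ)}
    (hk : VT.u i k ∈ HW (GT ℓ m) W (VT.zs ⟨0, Nat.sub_pos_of_lt (Nat.lt_succ_of_le hm)⟩)) :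
    VT.v i ⟨0, by omega⟩ ∈ HW (GT ℓ m) W (VT.zs ⟨0, Nat.sub_pos_of_lt (Nat.lt_succ_of_le hm)⟩) := by
  have h0 : VT.u i ⟨0, by omega⟩ ∈ HW (GT ℓ m) W (VT.zs ⟨0, Nat.sub_pos_of_lt (Nat.lt_succ_of_le hm)⟩) :=
    u_desc hℓ hm hx (n := (k : ℕ)) (by omega) hk 0 (Nat.zero_le _)
  have := mem_par hℓ hm hx h0
  rw [par_u_zero] at this
  exact v_desc0 hℓ hm hx this

theorem v0_to_hub {i : Fin m} (h0 : VT.v i ⟨0, by omega⟩ ∈ HW (GT ℓ m) W (VT.zs ⟨0, Nat.sub_pos_of_lt (Nat.lt_succ_of_le hm)⟩)) :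
    VT.zs ⟨m - ℓ, by omega⟩ ∈ HW (GT ℓ m) W (VT.zs ⟨0, Nat.sub_pos_of_lt (Nat.lt_succ_of_le hm)⟩) := by
  have := mem_par hℓ hm hx h0
  rwa [par_v_zero] at this

theorem zh_to_hub {j : Fin 2} (h : VT.zh j ∈ HW (GT ℓ m) W (VT.zs ⟨0, Nat.sub_pos_of_lt (Nat.lt_succ_of_le hm)⟩)) :
    VT.zs ⟨m - ℓ, by omega⟩ ∈ HW (GT ℓ m) W (VT.zs ⟨0, Nat.sub_pos_of_lt (Nat.lt_succ_of_le hm)⟩) := by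
  have h0 : VT.zh ⟨0, by omega⟩ ∈ HW (GT ℓ m) W (VT.zs ⟨0, Nat.sub_pos_of_lt (Nat.lt_succ_of_le hm)⟩) := by
    obtain ⟨jv, hlt⟩ := j
    match jv, hlt with
    | 0, hlt => exact h
    | 1, hlt =>
      have := mem_par hℓ hm hx h
      rw [par_zh_pos hℓ hm 1 hlt (by omega)] at this
      exact this
  have := mem_par hℓ hm hx h0
  rwa [par_zh_zero] at this

theorem zs_all (h : VT.zs ⟨m - ℓ, by omega⟩ ∈ HW (GT ℓ m) W (VT.zs ⟨0, Nat.sub_pos_of_lt (Nat.lt_succ_of_le hm)⟩)) :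
    ∀ t, VT.zs t ∈ HW (GT ℓ m) W (VT.zs ⟨0, Nat.sub_pos_of_lt (Nat.lt_succ_of_le hm)⟩) := by
  intro t
  exact zs_desc hℓ hm hx (by omega) h t.val (by omega)

end Desc
end TreeAux
open TreeAux in
/-- Any successful deletion set can be replaced by one consisting only of heads of the
paths `P^(i)`. -/
theorem tree_wins_by_heads_only (ℓ m : ℕ) (hℓ : 1 ≤ ℓ) (hm : ℓ ≤ m)
    (e : Fin m → Fin 3 → Fin (3 * ℓ))
    (hinj : ∀ i, Function.Injective (e i))
    (hcov : Finset.univ.biUnion (SetT ℓ m e) = Finset.univ)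
    (htwo : ∀ k : Fin (3 * ℓ),
      (Finset.univ.filter fun i => k ∈ SetT ℓ m e i).card = 2)
    (hex : ∃ W : Set (VT ℓ m), xT ℓ m (by omega) ∉ W ∧
      winsT ℓ m e (xT ℓ m (by omega)) W) :
    ∃ A : Set (Fin m),
      winsT ℓ m e (xT ℓ m (by omega)) {z | ∃ i ∈ A, z = VT.v i 0} := by
  classical
  have h0 : 0 < m + 1 - ℓ := by omega
  obtain ⟨W, hxW', hwin'⟩ := hex
  have hxW : VT.zs ⟨0, by omega⟩ ∉ W := hxW'
  have hwin : ∀ y : CandT ℓ, y ≠ CandT.c →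
      (HW (GT ℓ m) W (VT.zs ⟨0, by omega⟩) ∩ τT ℓ m e ⁻¹' {y}).ncard <
      (HW (GT ℓ m) W (VT.zs ⟨0, by omega⟩) ∩ τT ℓ m e ⁻¹' {CandT.c}).ncard := hwin'
  set x₀ : VT ℓ m := VT.zs ⟨0, by omega⟩ with hx₀
  -- Step a: no `zs` vertex is deleted by `W`.
  have hzsW : ∀ t, VT.zs t ∉ W := by
    intro t ht
    have hCempty : HW (GT ℓ m) W x₀ ∩ τT ℓ m e ⁻¹' {CandT.c} = ∅ := by
      ext z
      simp only [Set.mem_inter_iff, Set.mem_preimage, Set.mem_singleton_iff,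
        Set.mem_empty_iff_false, iff_false, not_and]
      intro hzH hzc
      have hhub : VT.zs ⟨m - ℓ, by omega⟩ ∈ HW (GT ℓ m) W x₀ := by
        cases z with
        | w i => exact v0_to_hub hℓ hm hxW ((w_branch hℓ hm hxW hzH).2 ⟨0, by omega⟩)
        | zh j => exact zh_to_hub hℓ hm hxW hzH
        | v i j => simp [τT] at hzc
        | u i k => simp [τT] at hzc
        | zs t => simp [τT] at hzc
      exact not_mem_of_mem_HW hℓ hm hxW (zs_all hℓ hm hxW hhub t) ht
    have hd := hwin CandT.d (fun h => by cases h)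
    rw [hCempty] at hd
    simp at hd
  -- Step b: every `zs` vertex is reachable.
  have hzsH : ∀ t, VT.zs t ∈ HW (GT ℓ m) W x₀ := by
    intro t
    refine mem_HW_of_closed hℓ hm hxW {z | ∃ t, z = VT.zs t} (fun z hz => par_mem_zs hℓ hm hz)
      ?_ ⟨t, rfl⟩
    rintro z ⟨t', rfl⟩
    exact hzsW t'
  -- Step c: the `d`-voters of `H_W` are exactly the `zs` vertices.
  have hzs_inj : Function.Injective (VT.zs : Fin (m+1-ℓ) → VT ℓ m) := by
    intro a b hab
    injection hab
  have hDold : HW (GT ℓ m) W x₀ ∩ τT ℓ m e ⁻¹' {CandT.d} = Set.range VT.zs := by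
    ext z
    constructor
    · rintro ⟨hzH, hzd⟩
      simp only [Set.mem_preimage, Set.mem_singleton_iff] at hzd
      cases z with
      | zs t => exact ⟨t, rfl⟩
      | v i j => simp [τT] at hzd
      | u i k => simp [τT] at hzd
      | w i => simp [τT] at hzd
      | zh j => simp [τT] at hzd
    · rintro ⟨t, rfl⟩
      exact ⟨hzsH t, rfl⟩
  have hrange : (Set.range (VT.zs : Fin (m+1-ℓ) → VT ℓ m)).ncard = m + 1 - ℓ := by
    rw [← Nat.card_coe_set_eq, Nat.card_range_of_injective hzs_inj,
      Nat.card_eq_fintype_card, Fintype.card_fin]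
  -- The choice of `A` and basic facts about the new deletion set.
  set K : Set (Fin m) := {i | VT.w i ∈ HW (GT ℓ m) W x₀} with hK
  refine ⟨{i | i ∉ K}, ?_⟩
  set A : Set (Fin m) := {i | i ∉ K} with hA
  set W' : Set (VT ℓ m) := {z | ∃ i ∈ A, z = VT.v i 0} with hW'
  have hxW'' : x₀ ∉ W' := by
    rintro ⟨i, _, h⟩
    rw [hx₀] at h
    cases h
  have hzsnW' : ∀ z : VT ℓ m, (∃ t, z = VT.zs t) → z ∉ W' := by
    rintro _ ⟨t, rfl⟩ ⟨i, _, h⟩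
    cases h
  -- all `zs` and `zh` vertices are reachable after deleting `W'`
  have hzsH' : ∀ t, VT.zs t ∈ HW (GT ℓ m) W' x₀ := by
    intro t
    exact mem_HW_of_closed hℓ hm hxW'' {z | ∃ t, z = VT.zs t}
      (fun z hz => par_mem_zs hℓ hm hz) hzsnW' ⟨t, rfl⟩
  have hzhH' : ∀ j, VT.zh j ∈ HW (GT ℓ m) W' x₀ := by
    intro j
    refine mem_HW_of_closed hℓ hm hxW'' {z | (∃ t, z = VT.zs t) ∨ (∃ j, z = VT.zh j)}
      (fun z hz => par_mem_Z hℓ hm hz) ?_ (Or.inr ⟨j, rfl⟩)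
    rintro z (⟨t, rfl⟩ | ⟨j', rfl⟩) ⟨i, _, h⟩ <;> cases h
  -- branches of surviving indices are reachable after deleting `W'`
  have hbranch' : ∀ i, i ∉ A → ∀ z, inB i z → z ∈ HW (GT ℓ m) W' x₀ := by
    intro i hiA z hz
    refine mem_HW_of_closed hℓ hm hxW'' (inB i) (fun z hz => par_mem_B hℓ hm hz) ?_ hz
    rintro z (rfl | ⟨k, rfl⟩ | ⟨j, rfl⟩ | ⟨t, rfl⟩) ⟨i', hi', h⟩
    · cases h
    · cases h
    · obtain ⟨rfl, -⟩ : i = i' ∧ j = 0 := by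
        injection h with h1 h2
        exact ⟨h1, h2⟩
      exact hiA hi'
    · cases h
  -- for deleted indices, nothing on the branch is reachable
  have hA_v : ∀ i ∈ A, ∀ j, VT.v i j ∉ HW (GT ℓ m) W' x₀ := by
    intro i hiA j hmem
    have h0' := v_desc0 hℓ hm hxW'' hmem
    exact not_mem_of_mem_HW hℓ hm hxW'' h0' ⟨i, hiA, rfl⟩
  have hA_u : ∀ i ∈ A, ∀ k, VT.u i k ∉ HW (GT ℓ m) W' x₀ := by
    intro i hiA k hmem
    have h0' := u_desc0 hℓ hm hxW'' hmem
    exact not_mem_of_mem_HW hℓ hm hxW'' h0' ⟨i, hiA, rfl⟩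
  have hA_w : ∀ i ∈ A, VT.w i ∉ HW (GT ℓ m) W' x₀ := by
    intro i hiA hmem
    have h0' := v_desc0 hℓ hm hxW'' ((w_branch hℓ hm hxW'' hmem).2 ⟨0, by omega⟩)
    exact not_mem_of_mem_HW hℓ hm hxW'' h0' ⟨i, hiA, rfl⟩
  -- Step e: the `c`-voters of `H_{W'}`.
  have hCnew : HW (GT ℓ m) W' x₀ ∩ τT ℓ m e ⁻¹' {CandT.c}
      = ({VT.zh 0, VT.zh 1} : Set (VT ℓ m)) ∪ VT.w '' K := by
    ext z
    constructor
    · rintro ⟨hzH, hzc⟩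
      simp only [Set.mem_preimage, Set.mem_singleton_iff] at hzc
      cases z with
      | w i =>
        right
        refine ⟨i, ?_, rfl⟩
        by_contra hiK
        exact hA_w i hiK hzH
      | zh j =>
        left
        obtain ⟨jv, hlt⟩ := j
        match jv, hlt with
        | 0, hlt => exact Or.inl rfl
        | 1, hlt => exact Or.inr rfl
      | v i j => simp [τT] at hzc
      | u i k => simp [τT] at hzc
      | zs t => simp [τT] at hzc
    · rintro ((rfl | rfl) | ⟨i, hiK, rfl⟩)
      · exact ⟨hzhH' 0, rfl⟩
      · exact ⟨hzhH' 1, rfl⟩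
      · exact ⟨hbranch' i (fun h => h hiK) _ (Or.inl rfl), rfl⟩
  have hw_inj : Function.Injective (VT.w : Fin m → VT ℓ m) := by
    intro a b hab
    injection hab
  have hCnew_card : (HW (GT ℓ m) W' x₀ ∩ τT ℓ m e ⁻¹' {CandT.c}).ncard = 2 + K.ncard := by
    rw [hCnew, Set.ncard_union_eq ?_ (Set.toFinite _) (Set.toFinite _),
      Set.ncard_pair (by simp : (VT.zh 0 : VT ℓ m) ≠ VT.zh 1),
      Set.ncard_image_of_injective _ hw_inj]
    rw [Set.disjoint_left]
    rintro z (rfl | rfl) ⟨i, _, h⟩ <;> cases h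
  -- Step f: the old `c`-count is at most the new one.
  have hCold_le : (HW (GT ℓ m) W x₀ ∩ τT ℓ m e ⁻¹' {CandT.c}).ncard ≤ 2 + K.ncard := by
    have hsub : HW (GT ℓ m) W x₀ ∩ τT ℓ m e ⁻¹' {CandT.c}
        ⊆ ({VT.zh 0, VT.zh 1} : Set (VT ℓ m)) ∪ VT.w '' K := by
      rintro z ⟨hzH, hzc⟩
      simp only [Set.mem_preimage, Set.mem_singleton_iff] at hzc
      cases z with
      | w i => exact Or.inr ⟨i, hzH, rfl⟩
      | zh j =>
        left
        obtain ⟨jv, hlt⟩ := j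
        match jv, hlt with
        | 0, hlt => exact Or.inl rfl
        | 1, hlt => exact Or.inr rfl
      | v i j => simp [τT] at hzc
      | u i k => simp [τT] at hzc
      | zs t => simp [τT] at hzc
    calc (HW (GT ℓ m) W x₀ ∩ τT ℓ m e ⁻¹' {CandT.c}).ncard
        ≤ (({VT.zh 0, VT.zh 1} : Set (VT ℓ m)) ∪ VT.w '' K).ncard :=
          Set.ncard_le_ncard hsub (Set.toFinite _)
      _ = 2 + K.ncard := by
          rw [Set.ncard_union_eq ?_ (Set.toFinite _) (Set.toFinite _),
            Set.ncard_pair (by simp : (VT.zh 0 : VT ℓ m) ≠ VT.zh 1),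
            Set.ncard_image_of_injective _ hw_inj]
          rw [Set.disjoint_left]
          rintro z (rfl | rfl) ⟨i, _, h⟩ <;> cases h
  -- Step g: element voters after deleting `W'` are a subset of those for `W`.
  have hElem : ∀ k : Fin (3*ℓ), HW (GT ℓ m) W' x₀ ∩ τT ℓ m e ⁻¹' {CandT.elem k}
      ⊆ HW (GT ℓ m) W x₀ ∩ τT ℓ m e ⁻¹' {CandT.elem k} := by
    rintro k z ⟨hzH, hzk⟩
    refine ⟨?_, hzk⟩
    simp only [Set.mem_preimage, Set.mem_singleton_iff] at hzk
    cases z with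
    | v i j =>
      have hiA : i ∉ A := fun hiA => hA_v i hiA j hzH
      have hiK : i ∈ K := not_not.mp hiA
      exact (w_branch hℓ hm hxW hiK).2 j
    | u i k' =>
      have hiA : i ∉ A := fun hiA => hA_u i hiA k' hzH
      have hiK : i ∈ K := not_not.mp hiA
      exact (w_branch hℓ hm hxW hiK).1 k'
    | w i => simp [τT] at hzk
    | zh j => simp [τT] at hzk
    | zs t => simp [τT] at hzk
  -- `d`-voters after deleting `W'`.
  have hDnew : HW (GT ℓ m) W' x₀ ∩ τT ℓ m e ⁻¹' {CandT.d} = Set.range VT.zs := by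
    ext z
    constructor
    · rintro ⟨hzH, hzd⟩
      simp only [Set.mem_preimage, Set.mem_singleton_iff] at hzd
      cases z with
      | zs t => exact ⟨t, rfl⟩
      | v i j => simp [τT] at hzd
      | u i k => simp [τT] at hzd
      | w i => simp [τT] at hzd
      | zh j => simp [τT] at hzd
    · rintro ⟨t, rfl⟩
      exact ⟨hzsH' t, rfl⟩
  -- Final assembly.
  intro y hy
  show (HW (GT ℓ m) W' x₀ ∩ τT ℓ m e ⁻¹' {y}).ncard <
    (HW (GT ℓ m) W' x₀ ∩ τT ℓ m e ⁻¹' {CandT.c}).ncard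
  have hyc := hwin y hy
  cases y with
  | c => exact absurd rfl hy
  | d =>
    rw [hDold] at hyc
    rw [hDnew, hCnew_card]
    exact lt_of_lt_of_le hyc hCold_le
  | elem k =>
    rw [hCnew_card]
    calc (HW (GT ℓ m) W' x₀ ∩ τT ℓ m e ⁻¹' {CandT.elem k}).ncard
        ≤ (HW (GT ℓ m) W x₀ ∩ τT ℓ m e ⁻¹' {CandT.elem k}).ncard :=
          Set.ncard_le_ncard (hElem k) (Set.toFinite _)
      _ < (HW (GT ℓ m) W x₀ ∩ τT ℓ m e ⁻¹' {CandT.c}).ncard := hyc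
      _ ≤ 2 + K.ncard := hCold_le
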